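/- arXiv:2311.10631 — 2 statements merged into one kernel-verified Lean document; each statement's English description precedes it below -/
import Mathlib

section
/- Let Q be a star-shaped subset of the plane with star center A, let H be an open half-plane, and let C be a connected component of Q ∩ H such that A ∉ C. Then A ∉ H and Q \ C is again star-shaped with star center A. -/
open Set Metric RealInnerProductSpace

abbrev Plane := EuclideanSpace ℝ (Fin 2)

def StarCenter (Q : Set Plane) (A : Plane) : Prop :=
  A ∈ Q ∧ ∀ B ∈ Q, segment ℝ A B ⊆ Q

/-! A segment from the star center meets a convex set `H` in a connected piece of `Q ∩ H`,
so the component of `Q ∩ H` through a point of that segment swallows the whole piece. If the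
component `C` misses the center `A`, this forces `A ∉ H`; and a segment `[A, B]` with `B ∉ C`
cannot enter `C`, since otherwise either `B ∈ H` (and `B` joins `C`) or both ends lie in the
convex complement of `H`, which `C ⊆ H` avoids. -/

section StarConvex

variable {E : Type*} [AddCommGroup E] [Module ℝ E] [TopologicalSpace E] [ContinuousAdd E]
  [ContinuousSMul ℝ E] {Q H : Set E} {A B x y z : E}

theorem StarConvex.mem_connectedComponentIn_inter_of_mem_segment (hQ : StarConvex ℝ A Q)
    (hB : B ∈ Q) (hH : Convex ℝ H) (hy : y ∈ segment ℝ A B ∩ H)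
    (hz : z ∈ segment ℝ A B ∩ H) : z ∈ connectedComponentIn (Q ∩ H) y :=
  ((convex_segment A B).inter hH).isPreconnected.subset_connectedComponentIn hy
    (inter_subset_inter_left H (hQ.segment_subset hB)) hz

theorem StarConvex.mem_connectedComponentIn_inter (hQ : StarConvex ℝ A Q) (hH : Convex ℝ H)
    (hAH : A ∈ H) (hx : x ∈ Q ∩ H) : A ∈ connectedComponentIn (Q ∩ H) x :=
  hQ.mem_connectedComponentIn_inter_of_mem_segment hx.1 hH ⟨right_mem_segment ℝ A x, hx.2⟩
    ⟨left_mem_segment ℝ A x, hAH⟩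

theorem StarConvex.diff_connectedComponentIn (hQ : StarConvex ℝ A Q) (hH : Convex ℝ H)
    (hHc : Convex ℝ Hᶜ) (hA : A ∉ connectedComponentIn (Q ∩ H) x) :
    StarConvex ℝ A (Q \ connectedComponentIn (Q ∩ H) x) := by
  refine starConvex_iff_segment_subset.2 fun B hB P hP =>
    ⟨hQ.segment_subset hB.1 hP, fun hPC => ?_⟩
  have hPQH : P ∈ Q ∩ H := connectedComponentIn_subset _ _ hPC
  rw [connectedComponentIn_eq hPC] at hA hB
  by_cases hAH : A ∈ H
  · exact hA (hQ.mem_connectedComponentIn_inter hH hAH hPQH)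
  by_cases hBH : B ∈ H
  · exact hB.2 (hQ.mem_connectedComponentIn_inter_of_mem_segment hB.1 hH ⟨hP, hPQH.2⟩
      ⟨right_mem_segment ℝ A B, hBH⟩)
  exact hHc.segment_subset hAH hBH hP hPQH.2

end StarConvex

theorem starCenter_iff (Q : Set Plane) (A : Plane) :
    StarCenter Q A ↔ A ∈ Q ∧ StarConvex ℝ A Q :=
  and_congr_right fun _ => starConvex_iff_segment_subset.symm

theorem stmt_0_general (Q : Set Plane) (A : Plane) (hQ : StarCenter Q A)
    (u : Plane) (c : ℝ)
    (H : Set Plane) (hH : H = {x : Plane | c < (inner ℝ x u : ℝ)})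
    (C : Set Plane) (x : Plane) (hx : x ∈ Q ∩ H)
    (hC : C = connectedComponentIn (Q ∩ H) x)
    (hA : A ∉ C) :
    A ∉ H ∧ StarCenter (Q \ C) A := by
  obtain ⟨hAQ, hQ⟩ := (starCenter_iff Q A).1 hQ
  have hlin : IsLinearMap ℝ fun y : Plane => ⟪y, u⟫ :=
    ⟨fun a b => inner_add_left a b u, fun r a => real_inner_smul_left a u r⟩
  have hHc : Hᶜ = {y : Plane | ⟪y, u⟫ ≤ c} := by
    ext; simp [hH]
  have hconv : Convex ℝ H := hH ▸ convex_halfSpace_gt hlin c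
  have hconvc : Convex ℝ Hᶜ := hHc ▸ convex_halfSpace_le hlin c
  subst hC
  exact ⟨fun hAH => hA (hQ.mem_connectedComponentIn_inter hconv hAH hx),
    (starCenter_iff _ A).2 ⟨⟨hAQ, hA⟩, hQ.diff_connectedComponentIn hconv hconvc hA⟩⟩

/-- If `C` is a connected component of `Q ∩ H` for an open half-plane `H`, and the star
center `A` of `Q` is not in `C`, then `A ∉ H` and `Q \ C` is star-shaped with center `A`. -/
theorem stmt_0 (Q : Set Plane) (A : Plane) (hQ : StarCenter Q A)
    (u : Plane) (hu : u ≠ 0) (c : ℝ)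
    (H : Set Plane) (hH : H = {x : Plane | c < (inner ℝ x u : ℝ)})
    (C : Set Plane) (x : Plane) (hx : x ∈ Q ∩ H)
    (hC : C = connectedComponentIn (Q ∩ H) x)
    (hA : A ∉ C) :
    A ∉ H ∧ StarCenter (Q \ C) A :=
  stmt_0_general Q A hQ u c H hH C x hx hC hA
end

section
/- Let P ⊆ ℝ² be a fixed nonempty compact convex set, let f be a continuous function (with respect to Hausdorff distance) from the nonempty compact subsets of P to ℝ, and let K be the collection of nonempty compact star-shaped subsets of P; then K is closed in the Hausdorff metric, and f attains a maximum on K. -/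
open Set Metric TopologicalSpace

lemma star_closed (P : Set Plane) (hP : IsCompact P) :
    IsClosed {Q : NonemptyCompacts Plane | (Q : Set Plane) ⊆ P ∧ ∃ A, StarCenter Q A} := by
  apply IsSeqClosed.isClosed
  intro Qn Q hmem hlim
  have hQn_sub : ∀ n, (Qn n : Set Plane) ⊆ P := fun n => (hmem n).1
  have hfin : ∀ n, EMetric.hausdorffEdist (Qn n : Set Plane) (Q : Set Plane) ≠ ⊤ := fun n =>
    Metric.hausdorffEdist_ne_top_of_nonempty_of_bounded (Qn n).nonempty Q.nonempty
      (Qn n).isCompact.isBounded Q.isCompact.isBounded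
  have htend : Filter.Tendsto (fun n => hausdorffDist (Qn n : Set Plane) (Q : Set Plane))
      Filter.atTop (nhds 0) := by
    have := tendsto_iff_dist_tendsto_zero.mp hlim
    simpa only [NonemptyCompacts.dist_eq] using this
  have hkey : ∀ ε > (0:ℝ), ∀ N : ℕ, ∃ n ≥ N,
      hausdorffDist (Qn n : Set Plane) (Q : Set Plane) < ε := by
    intro ε hε N
    obtain ⟨M, hM⟩ := Metric.tendsto_atTop.mp htend ε hε
    refine ⟨max N M, le_max_left _ _, ?_⟩
    have := hM (max N M) (le_max_right _ _)
    rwa [Real.dist_eq, sub_zero, abs_of_nonneg hausdorffDist_nonneg] at this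
  -- Q ⊆ P
  have hQsubP : (Q : Set Plane) ⊆ P := by
    intro x hx
    have : x ∈ closure P := by
      rw [Metric.mem_closure_iff]
      intro ε hε
      obtain ⟨n, -, hn⟩ := hkey ε hε 0
      have hcomm : hausdorffDist (Q : Set Plane) (Qn n : Set Plane) < ε := by
        rwa [hausdorffDist_comm]
      obtain ⟨y, hy, hxy⟩ := exists_dist_lt_of_hausdorffDist_lt hx hcomm
        (by rw [EMetric.hausdorffEdist_comm]; exact hfin n)
      exact ⟨y, hQn_sub n hy, hxy⟩
    rwa [hP.isClosed.closure_eq] at this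
  refine ⟨hQsubP, ?_⟩
  -- extract star centers and a convergent subsequence
  choose A hA using fun n => (hmem n).2
  have hAP : ∀ n, A n ∈ P := fun n => hQn_sub n (hA n).1
  obtain ⟨a, haP, φ, hφ, hconv⟩ := hP.tendsto_subseq hAP
  refine ⟨a, ?_, ?_⟩
  · -- a ∈ Q
    have : a ∈ closure (Q : Set Plane) := by
      rw [Metric.mem_closure_iff]
      intro ε hε
      obtain ⟨N, hN⟩ := Metric.tendsto_atTop.mp hconv (ε/2) (by linarith)
      obtain ⟨n, hn, hd⟩ := hkey (ε/2) (by linarith) (φ N)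
      -- need an index m = φ k with φ k ≥ N index and hausdorffDist small; instead
      -- pick k with both: use tendsto of subsequence distances
      obtain ⟨K, hK⟩ := Metric.tendsto_atTop.mp (htend.comp hφ.tendsto_atTop) (ε/2) (by linarith)
      set m := max N K with hm
      have h1 : dist (A (φ m)) a < ε/2 := hN m (le_max_left _ _)
      have h2 : hausdorffDist (Qn (φ m) : Set Plane) (Q : Set Plane) < ε/2 := by
        have := hK m (le_max_right _ _)
        rwa [Function.comp, Real.dist_eq, sub_zero, abs_of_nonneg hausdorffDist_nonneg] at this
      obtain ⟨y, hy, hxy⟩ := exists_dist_lt_of_hausdorffDist_lt (hA (φ m)).1 h2 (hfin _)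
      exact ⟨y, hy, by
        calc dist a y ≤ dist a (A (φ m)) + dist (A (φ m)) y := dist_triangle _ _ _
        _ < ε/2 + ε/2 := by rw [dist_comm a]; exact add_lt_add h1 hxy
        _ = ε := by ring⟩
    rwa [Q.isCompact.isClosed.closure_eq] at this
  · -- segments
    intro B hB C hC
    obtain ⟨s, t, hs, ht, hst, hCst⟩ := hC
    have : C ∈ closure (Q : Set Plane) := by
      rw [Metric.mem_closure_iff]
      intro ε hε
      obtain ⟨N, hN⟩ := Metric.tendsto_atTop.mp hconv (ε/3) (by linarith)
      obtain ⟨K, hK⟩ := Metric.tendsto_atTop.mp (htend.comp hφ.tendsto_atTop) (ε/3) (by linarith)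
      set m := max N K with hm
      have h1 : dist (A (φ m)) a < ε/3 := hN m (le_max_left _ _)
      have h2 : hausdorffDist (Qn (φ m) : Set Plane) (Q : Set Plane) < ε/3 := by
        have := hK m (le_max_right _ _)
        rwa [Function.comp, Real.dist_eq, sub_zero, abs_of_nonneg hausdorffDist_nonneg] at this
      have h2' : hausdorffDist (Q : Set Plane) (Qn (φ m) : Set Plane) < ε/3 := by
        rwa [hausdorffDist_comm]
      -- approximate B in Qn (φ m)
      obtain ⟨B', hB', hBB'⟩ := exists_dist_lt_of_hausdorffDist_lt hB h2'
        (by rw [EMetric.hausdorffEdist_comm]; exact hfin _)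
      -- combo point in Qn (φ m)
      set C' := s • A (φ m) + t • B' with hC'
      have hC'mem : C' ∈ (Qn (φ m) : Set Plane) :=
        (hA (φ m)).2 B' hB' ⟨s, t, hs, ht, hst, rfl⟩
      obtain ⟨y, hy, hCy⟩ := exists_dist_lt_of_hausdorffDist_lt hC'mem h2 (hfin _)
      refine ⟨y, hy, ?_⟩
      have hCC' : dist C C' ≤ s * dist a (A (φ m)) + t * dist B B' := by
        rw [← hCst, hC']
        calc dist (s • a + t • B) (s • A (φ m) + t • B')
            ≤ dist (s • a) (s • A (φ m)) + dist (t • B) (t • B') := dist_add_add_le _ _ _ _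
          _ = s * dist a (A (φ m)) + t * dist B B' := by
              rw [dist_smul₀, dist_smul₀, Real.norm_of_nonneg hs, Real.norm_of_nonneg ht]
      have hbound : s * dist a (A (φ m)) + t * dist B B' < ε/3 + ε/3 := by
        have e1 : s * dist a (A (φ m)) ≤ s * (ε/3) :=
          mul_le_mul_of_nonneg_left (by rw [dist_comm]; exact h1.le) hs
        have e2 : t * dist B B' ≤ t * (ε/3) := mul_le_mul_of_nonneg_left hBB'.le ht
        have : s * (ε/3) + t * (ε/3) = ε/3 := by rw [← add_mul, hst, one_mul]
        nlinarith [dist_nonneg (x := a) (y := A (φ m)), dist_nonneg (x := B) (y := B')]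
      calc dist C y ≤ dist C C' + dist C' y := dist_triangle _ _ _
        _ < (ε/3 + ε/3) + ε/3 := add_lt_add_of_le_of_lt (hCC'.trans hbound.le) hCy
        _ = ε := by ring
    rwa [Q.isCompact.isClosed.closure_eq] at this

/-- The collection of nonempty compact star-shaped subsets of a nonempty compact convex set
`P` is closed in the Hausdorff metric, and every Hausdorff-continuous real-valued function
attains a maximum on it. -/
theorem stmt_12 (P : Set Plane) (hP : IsCompact P) (hPne : P.Nonempty) (hPconv : Convex ℝ P)
    (f : NonemptyCompacts Plane → ℝ) (hf : Continuous f) :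
    IsClosed {Q : NonemptyCompacts Plane | (Q : Set Plane) ⊆ P ∧ ∃ A, StarCenter Q A} ∧
      ∃ Q ∈ {Q : NonemptyCompacts Plane | (Q : Set Plane) ⊆ P ∧ ∃ A, StarCenter Q A},
        ∀ Q' ∈ {Q : NonemptyCompacts Plane | (Q : Set Plane) ⊆ P ∧ ∃ A, StarCenter Q A},
          f Q' ≤ f Q := by
  have hclosed := star_closed P hP
  refine ⟨hclosed, ?_⟩
  -- the set is nonempty: P itself
  set S := {Q : NonemptyCompacts Plane | (Q : Set Plane) ⊆ P ∧ ∃ A, StarCenter Q A} with hS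
  have hPmem : (⟨⟨P, hP⟩, hPne⟩ : NonemptyCompacts Plane) ∈ S := by
    refine ⟨subset_rfl, hPne.some, hPne.some_mem, fun B hB => ?_⟩
    exact hPconv.segment_subset hPne.some_mem hB
  -- S compact: closed subset of range of isometric embedding of NonemptyCompacts P
  haveI : CompactSpace P := isCompact_iff_compactSpace.mp hP
  let g : NonemptyCompacts P → NonemptyCompacts Plane := fun K =>
    ⟨⟨Subtype.val '' (K : Set P), K.isCompact.image continuous_subtype_val⟩,
      K.nonempty.image _⟩
  have hgiso : Isometry g := by
    intro K K'
    simp only [g, edist_dist, NonemptyCompacts.dist_eq, NonemptyCompacts.coe_mk,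
      Compacts.coe_mk]
    rw [hausdorffDist_image (Φ := (Subtype.val : P → Plane)) isometry_subtype_coe]
  have hrange : IsCompact (range g) := isCompact_range hgiso.continuous
  have hSsub : S ⊆ range g := by
    rintro Q ⟨hQP, -⟩
    refine ⟨⟨⟨Subtype.val ⁻¹' (Q : Set Plane), ?_⟩, ?_⟩, ?_⟩
    · exact (Q.isCompact.isClosed.preimage continuous_subtype_val).isCompact
    · obtain ⟨x, hx⟩ := Q.nonempty
      exact ⟨⟨x, hQP hx⟩, hx⟩
    · apply NonemptyCompacts.ext
      simp only [g, NonemptyCompacts.coe_mk, Compacts.coe_mk]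
      rw [Subtype.image_preimage_coe]
      exact inter_eq_self_of_subset_right hQP
  have hScompact : IsCompact S := hrange.of_isClosed_subset hclosed hSsub
  obtain ⟨Q, hQ, hmax⟩ := hScompact.exists_isMaxOn ⟨_, hPmem⟩ hf.continuousOn
  exact ⟨Q, hQ, fun Q' hQ' => hmax hQ'⟩
end
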